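/- Let F be continuous on [a,b] and differentiable on (a,b) with continuous derivative F' on (a,b), and let F̂ be its least concave majorant. Then the derivative (F̂)' is continuous on (a,b). -/

import Mathlib

/-!
The majorant `M` is concave, so at every `x ∈ (a, b)` it has one-sided derivatives with
`M'₊(x) ≤ M'₋(x)`. They agree. Where `M` touches `F`, the differentiability of `F` squeezes
`M'₋(x) ≤ F'(x) ≤ M'₊(x)`. Where `M > F`, a corner `M'₊(x) < M'₋(x)` could be cut off: a line of
intermediate slope passing slightly below `M(x)` stays above `F` near `x` by continuity and above
`M` away from `x` by concavity, so it is a concave majorant smaller than `M` at `x`.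

Thus `M` is differentiable and concave on `(a, b)`, and the derivative of such a function is
continuous: it is antitone, and `M'(y) ≥ (M(z) - M(y)) / (z - y)` for `y < z`, where the right
side is continuous in `y` and approaches `M'(x)` as `z ↓ x` (symmetrically from the left).
-/

open Set Filter Topology

noncomputable def leastConcaveMajorant (a b : ℝ) (F : ℝ → ℝ) (x : ℝ) : ℝ :=
  sInf {y : ℝ | ∃ G : ℝ → ℝ, ConcaveOn ℝ (Set.Icc a b) G ∧
    (∀ z ∈ Set.Icc a b, F z ≤ G z) ∧ y = G x}

section OneSidedDerivatives

variable {f g : ℝ → ℝ} {f' g' x : ℝ}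

theorem le_of_hasDerivWithinAt_Ioi_of_le (hf : HasDerivWithinAt f f' (Ioi x) x)
    (hg : HasDerivWithinAt g g' (Ioi x) x) (hfg : ∀ᶠ y in 𝓝[>] x, f y ≤ g y) (hx : f x = g x) :
    f' ≤ g' := by
  refine le_of_tendsto_of_tendsto ((hasDerivWithinAt_iff_tendsto_slope' self_notMem_Ioi).1 hf)
    ((hasDerivWithinAt_iff_tendsto_slope' self_notMem_Ioi).1 hg) ?_
  filter_upwards [hfg, self_mem_nhdsWithin] with y hy (hxy : x < y)
  rw [slope_def_field, slope_def_field, hx]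
  exact div_le_div_of_nonneg_right (by linarith) (by linarith)

theorem le_of_hasDerivWithinAt_Iio_of_le (hf : HasDerivWithinAt f f' (Iio x) x)
    (hg : HasDerivWithinAt g g' (Iio x) x) (hfg : ∀ᶠ y in 𝓝[<] x, f y ≤ g y) (hx : f x = g x) :
    g' ≤ f' := by
  refine le_of_tendsto_of_tendsto ((hasDerivWithinAt_iff_tendsto_slope' self_notMem_Iio).1 hg)
    ((hasDerivWithinAt_iff_tendsto_slope' self_notMem_Iio).1 hf) ?_
  filter_upwards [hfg, self_mem_nhdsWithin] with y hy (hyx : y < x)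
  rw [slope_def_field, slope_def_field, hx]
  exact div_le_div_of_nonpos_of_le (by linarith) (by linarith)

end OneSidedDerivatives

namespace ConcaveOn

variable {S : Set ℝ} {f : ℝ → ℝ} {x : ℝ}

theorem differentiableWithinAt_Ioi_of_mem_interior (hf : ConcaveOn ℝ S f)
    (hx : x ∈ interior S) : DifferentiableWithinAt ℝ f (Ioi x) x := by
  simpa using (hf.neg.differentiableWithinAt_Ioi_of_mem_interior hx).neg

theorem differentiableWithinAt_Iio_of_mem_interior (hf : ConcaveOn ℝ S f)
    (hx : x ∈ interior S) : DifferentiableWithinAt ℝ f (Iio x) x := by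
  simpa using (hf.neg.differentiableWithinAt_Iio_of_mem_interior hx).neg

theorem rightDeriv_le_leftDeriv_of_mem_interior (hf : ConcaveOn ℝ S f) (hx : x ∈ interior S) :
    derivWithin f (Ioi x) x ≤ derivWithin f (Iio x) x := by
  have := hf.neg.leftDeriv_le_rightDeriv_of_mem_interior hx
  rw [derivWithin.neg, derivWithin.neg] at this
  linarith

theorem continuousWithinAt_deriv_Ioi (hf : ConcaveOn ℝ S f) (hS : IsOpen S)
    (hd : ∀ y ∈ S, DifferentiableAt ℝ f y) (hx : x ∈ S) :
    ContinuousWithinAt (deriv f) (Ioi x) x := by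
  have hS' : ∀ᶠ y in 𝓝[>] x, y ∈ S := mem_nhdsWithin_of_mem_nhds (hS.mem_nhds hx)
  refine tendsto_order.2 ⟨fun β hβ => ?_, fun β hβ => ?_⟩
  · -- a secant from `x` steeper than `β` stays steeper when its left end moves slightly
    have hslope : ∀ᶠ z in 𝓝[>] x, β < slope f x z :=
      ((hd x hx).hasDerivAt.tendsto_slope.mono_left (nhdsGT_le_nhdsNE x)).eventually
        (lt_mem_nhds hβ)
    obtain ⟨z, hβz, hzS, hxz : x < z⟩ := (hslope.and (hS'.and self_mem_nhdsWithin)).exists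
    have hcont : ContinuousAt (fun y => (f z - f y) / (z - y)) x :=
      (continuousAt_const.sub (hd x hx).continuousAt).div (continuousAt_const.sub continuousAt_id)
        (sub_ne_zero.2 hxz.ne')
    rw [slope_def_field] at hβz
    filter_upwards [nhdsWithin_le_nhds (hcont.eventually (lt_mem_nhds hβz)), hS',
      nhdsWithin_le_nhds (gt_mem_nhds hxz)] with y hβy hyS hyz
    rw [← slope_def_field] at hβy
    exact hβy.trans_le (hf.slope_le_deriv hyS hzS hyz (hd y hyS))
  · filter_upwards [hS', self_mem_nhdsWithin] with y hyS (hxy : x < y)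
    exact (hf.antitoneOn_deriv hd hx hyS hxy.le).trans_lt hβ

theorem continuousWithinAt_deriv_Iio (hf : ConcaveOn ℝ S f) (hS : IsOpen S)
    (hd : ∀ y ∈ S, DifferentiableAt ℝ f y) (hx : x ∈ S) :
    ContinuousWithinAt (deriv f) (Iio x) x := by
  have hS' : ∀ᶠ y in 𝓝[<] x, y ∈ S := mem_nhdsWithin_of_mem_nhds (hS.mem_nhds hx)
  refine tendsto_order.2 ⟨fun β hβ => ?_, fun β hβ => ?_⟩
  · filter_upwards [hS', self_mem_nhdsWithin] with y hyS (hyx : y < x)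
    exact hβ.trans_le (hf.antitoneOn_deriv hd hyS hx hyx.le)
  · have hslope : ∀ᶠ z in 𝓝[<] x, slope f x z < β :=
      ((hd x hx).hasDerivAt.tendsto_slope.mono_left (nhdsLT_le_nhdsNE x)).eventually
        (gt_mem_nhds hβ)
    obtain ⟨z, hzβ, hzS, hzx : z < x⟩ := (hslope.and (hS'.and self_mem_nhdsWithin)).exists
    have hcont : ContinuousAt (fun y => (f y - f z) / (y - z)) x :=
      ((hd x hx).continuousAt.sub continuousAt_const).div (continuousAt_id.sub continuousAt_const)
        (sub_ne_zero.2 hzx.ne')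
    rw [slope_comm, slope_def_field] at hzβ
    filter_upwards [nhdsWithin_le_nhds (hcont.eventually (gt_mem_nhds hzβ)), hS',
      nhdsWithin_le_nhds (lt_mem_nhds hzx)] with y hyβ hyS hzy
    rw [← slope_def_field] at hyβ
    exact (hf.deriv_le_slope hzS hyS hzy (hd y hyS)).trans_lt hyβ

theorem continuousOn_deriv (hf : ConcaveOn ℝ S f) (hS : IsOpen S)
    (hd : ∀ y ∈ S, DifferentiableAt ℝ f y) : ContinuousOn (deriv f) S := fun _ hx =>
  (continuousAt_iff_continuous_left'_right'.2 ⟨hf.continuousWithinAt_deriv_Iio hS hd hx,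
    hf.continuousWithinAt_deriv_Ioi hS hd hx⟩).continuousWithinAt

end ConcaveOn

theorem exists_affine_le_of_slope_gap {F G : ℝ → ℝ} {s : Set ℝ} {x m dR dL : ℝ}
    (hFx : ContinuousAt F x) (hFG : ∀ z ∈ s, F z ≤ G z) (hlt : F x < G x)
    (hR : ∀ z ∈ s, x < z → slope G x z ≤ dR) (hL : ∀ z ∈ s, z < x → dL ≤ slope G x z)
    (hRm : dR < m) (hmL : m < dL) :
    ∃ δ > 0, ∀ z ∈ s, F z ≤ G x - δ + m * (z - x) := by
  have hnear : ∀ᶠ z in 𝓝 x, F z - m * (z - x) < (F x + G x) / 2 := by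
    have : ContinuousAt (fun z => F z - m * (z - x)) x := by fun_prop
    exact this.eventually (gt_mem_nhds (by simpa using left_lt_add_div_two.2 hlt))
  obtain ⟨u, v, ⟨hux, hxv⟩, huv⟩ := mem_nhds_iff_exists_Ioo_subset.1 hnear
  set δ := min ((G x - F x) / 2) (min ((m - dR) * (v - x)) ((dL - m) * (x - u)))
  have hδ₁ : δ ≤ (G x - F x) / 2 := min_le_left _ _
  have hδ₂ : δ ≤ (m - dR) * (v - x) := (min_le_right _ _).trans (min_le_left _ _)
  have hδ₃ : δ ≤ (dL - m) * (x - u) := (min_le_right _ _).trans (min_le_right _ _)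
  refine ⟨δ, lt_min (by linarith) (lt_min (by nlinarith) (by nlinarith)), fun z hz => ?_⟩
  have hGz : G z - G x = slope G x z * (z - x) := by
    rw [mul_comm, ← smul_eq_mul, sub_smul_slope, vsub_eq_sub]
  rcases le_or_gt v z with hvz | hzv
  · -- far to the right the chord of slope `m` lies above `G`
    have := mul_le_mul_of_nonneg_right (hR z hz (hxv.trans_le hvz)) (by linarith : 0 ≤ z - x)
    have := mul_le_mul_of_nonneg_left (by linarith : v - x ≤ z - x) (by linarith : 0 ≤ m - dR)
    linarith [hFG z hz]
  rcases le_or_gt z u with hzu | huz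
  · have := mul_le_mul_of_nonpos_right (hL z hz (hzu.trans_lt hux)) (by linarith : z - x ≤ 0)
    have := mul_le_mul_of_nonneg_left (by linarith : x - u ≤ x - z) (by linarith : 0 ≤ dL - m)
    linarith [hFG z hz]
  · have hzF : F z - m * (z - x) < (F x + G x) / 2 := huv ⟨huz, hzv⟩
    linarith

section LeastConcaveMajorant

variable {a b x : ℝ} {F G : ℝ → ℝ}

theorem leastConcaveMajorant_le (hG : ConcaveOn ℝ (Icc a b) G) (hFG : ∀ z ∈ Icc a b, F z ≤ G z)
    (hx : x ∈ Icc a b) : leastConcaveMajorant a b F x ≤ G x :=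
  csInf_le ⟨F x, by rintro _ ⟨G, -, hFG, rfl⟩; exact hFG x hx⟩ ⟨G, hG, hFG, rfl⟩

theorem le_leastConcaveMajorant_of_forall (hF : ContinuousOn F (Icc a b)) {y : ℝ}
    (h : ∀ G, ConcaveOn ℝ (Icc a b) G → (∀ z ∈ Icc a b, F z ≤ G z) → y ≤ G x) :
    y ≤ leastConcaveMajorant a b F x := by
  obtain ⟨C, hC⟩ := isCompact_Icc.bddAbove_image hF
  refine le_csInf ⟨C, fun _ => C, concaveOn_const C (convex_Icc a b),
    fun z hz => hC (mem_image_of_mem F hz), rfl⟩ ?_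
  rintro _ ⟨G, hG, hFG, rfl⟩
  exact h G hG hFG

theorem le_leastConcaveMajorant (hF : ContinuousOn F (Icc a b)) (hx : x ∈ Icc a b) :
    F x ≤ leastConcaveMajorant a b F x :=
  le_leastConcaveMajorant_of_forall hF fun _ _ hFG => hFG x hx

theorem concaveOn_leastConcaveMajorant (hF : ContinuousOn F (Icc a b)) :
    ConcaveOn ℝ (Icc a b) (leastConcaveMajorant a b F) := by
  refine ⟨convex_Icc a b, fun y hy z hz s t hs ht hst => ?_⟩
  refine le_leastConcaveMajorant_of_forall hF fun G hG hFG => ?_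
  calc s • leastConcaveMajorant a b F y + t • leastConcaveMajorant a b F z
      ≤ s • G y + t • G z := by
        gcongr
        exacts [leastConcaveMajorant_le hG hFG hy, leastConcaveMajorant_le hG hFG hz]
    _ ≤ G (s • y + t • z) := hG.2 hy hz hs ht hst

theorem leastConcaveMajorant_leftDeriv_le_rightDeriv (hF : ContinuousOn F (Icc a b))
    (hx : x ∈ Ioo a b) (hFx : DifferentiableAt ℝ F x) :
    derivWithin (leastConcaveMajorant a b F) (Iio x) x ≤
      derivWithin (leastConcaveMajorant a b F) (Ioi x) x := by
  set M := leastConcaveMajorant a b F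
  have hM := concaveOn_leastConcaveMajorant hF
  have hxI : x ∈ Icc a b := Ioo_subset_Icc_self hx
  have hxi : x ∈ interior (Icc a b) := by rwa [interior_Icc]
  have hR := (hM.differentiableWithinAt_Ioi_of_mem_interior hxi).hasDerivWithinAt
  have hL := (hM.differentiableWithinAt_Iio_of_mem_interior hxi).hasDerivWithinAt
  rcases (le_leastConcaveMajorant hF hxI).lt_or_eq with hlt | heq
  · -- a corner away from the graph of `F` could be cut off by a chord
    by_contra! hgap
    obtain ⟨m, hRm, hmL⟩ := exists_between hgap
    obtain ⟨δ, hδ, hFL⟩ := exists_affine_le_of_slope_gap hFx.continuousAt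
      (fun z hz => le_leastConcaveMajorant hF hz) hlt
      (fun z hz hxz => hM.slope_le_of_hasDerivWithinAt_Ioi hxI hz hxz hR)
      (fun z hz hzx => slope_comm M x z ▸ hM.le_slope_of_hasDerivWithinAt_Iio hz hxI hzx hL)
      hRm hmL
    have hLconc : ConcaveOn ℝ (Icc a b) (fun z => M x - δ + m * (z - x)) :=
      ⟨convex_Icc a b, fun y _ z _ s t _ _ hst => le_of_eq (by
        simp only [smul_eq_mul]; linear_combination (M x - δ - m * x) * hst)⟩
    have := leastConcaveMajorant_le hLconc hFL hxI
    linarith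
  · have hFM : ∀ᶠ y in 𝓝 x, F y ≤ M y :=
      mem_of_superset (Icc_mem_nhds hx.1 hx.2) fun y hy => le_leastConcaveMajorant hF hy
    exact (le_of_hasDerivWithinAt_Iio_of_le hFx.hasDerivAt.hasDerivWithinAt hL
      (nhdsWithin_le_nhds hFM) heq).trans (le_of_hasDerivWithinAt_Ioi_of_le
        hFx.hasDerivAt.hasDerivWithinAt hR (nhdsWithin_le_nhds hFM) heq)

theorem differentiableAt_leastConcaveMajorant (hF : ContinuousOn F (Icc a b))
    (hx : x ∈ Ioo a b) (hFx : DifferentiableAt ℝ F x) :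
    DifferentiableAt ℝ (leastConcaveMajorant a b F) x := by
  have hM := concaveOn_leastConcaveMajorant hF
  have hxi : x ∈ interior (Icc a b) := by rwa [interior_Icc]
  have hR := (hM.differentiableWithinAt_Ioi_of_mem_interior hxi).hasDerivWithinAt
  have hL := (hM.differentiableWithinAt_Iio_of_mem_interior hxi).hasDerivWithinAt
  rw [le_antisymm (leastConcaveMajorant_leftDeriv_le_rightDeriv hF hx hFx)
    (hM.rightDeriv_le_leftDeriv_of_mem_interior hxi)] at hL
  exact (hasDerivAt_iff_tendsto_slope_left_right.2
    ⟨(hasDerivWithinAt_iff_tendsto_slope' self_notMem_Iio).1 hL,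
      (hasDerivWithinAt_iff_tendsto_slope' self_notMem_Ioi).1 hR⟩).differentiableAt

end LeastConcaveMajorant

theorem stmt4_general (a b : ℝ) (F : ℝ → ℝ)
    (hF : ContinuousOn F (Set.Icc a b))
    (hFdiff : ∀ x ∈ Set.Ioo a b, DifferentiableAt ℝ F x) :
    ContinuousOn (deriv (leastConcaveMajorant a b F)) (Set.Ioo a b) :=
  ((concaveOn_leastConcaveMajorant hF).subset Ioo_subset_Icc_self
    (convex_Ioo a b)).continuousOn_deriv isOpen_Ioo fun x hx =>
      differentiableAt_leastConcaveMajorant hF hx (hFdiff x hx)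

theorem stmt4 (a b : ℝ) (hab : a < b) (F : ℝ → ℝ)
    (hF : ContinuousOn F (Set.Icc a b))
    (hFdiff : ∀ x ∈ Set.Ioo a b, DifferentiableAt ℝ F x)
    (hF'cont : ContinuousOn (deriv F) (Set.Ioo a b)) :
    ContinuousOn (deriv (leastConcaveMajorant a b F)) (Set.Ioo a b) :=
  stmt4_general a b F hF hFdiff
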